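/- (Theorem 1, E-I case.) Let G be a simple directed graph on [n] and suppose j is a dominated node of G. Then for any choice of parameters a_i > 0, 1 < c_i < 1 + a_i (i ∈ [n]) and θ > 0, the E-I TLN constructed from G and the E-I TLN constructed from the induced subgraph G|_{[n]∖j} (with the restricted parameters) have the same set of fixed point supports among the excitatory nodes and the inhibitory node: FP(G) = FP(G|_{[n]∖j}). -/
import Mathlib


/-- The input `y_i(x) = Σ_ℓ W_{iℓ} x_ℓ + b_i` to node `i` in a threshold-linear network. -/
noncomputable def tlnY {ι : Type} [Fintype ι] (W : ι → ι → ℝ) (b : ι → ℝ)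
    (x : ι → ℝ) (i : ι) : ℝ :=
  (∑ l, W i l * x l) + b i

/-- `x` is a fixed point of the TLN `(W,b)`: `x_i = [y_i(x)]₊` for all `i`. -/
def IsFixedPt {ι : Type} [Fintype ι] (W : ι → ι → ℝ) (b : ι → ℝ) (x : ι → ℝ) : Prop :=
  ∀ i, x i = max (tlnY W b x i) 0

/-- `FP(W,b)`: the set of supports of fixed points of the TLN `(W,b)`. -/
def FPsupp {ι : Type} [Fintype ι] (W : ι → ι → ℝ) (b : ι → ℝ) : Set (Set ι) :=
  {σ | ∃ x, IsFixedPt W b x ∧ σ = {i | 0 < x i}}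

/-- Node `k` graphically dominates node `j` in the directed graph `G`. -/
def GraphDominates {V : Type} (G : V → V → Prop) (k j : V) : Prop :=
  (∀ i, i ≠ j → i ≠ k → G i j → G i k) ∧ G j k ∧ ¬ G k j

open Classical in
/-- The weight matrix of the E-I TLN constructed from the graph `G` with parameters `a, c`.
Excitatory nodes are `Sum.inl i`; the inhibitory node `I` is `Sum.inr ()`. -/
noncomputable def eiW {V : Type} [DecidableEq V] (G : V → V → Prop) (a c : V → ℝ) :
    (V ⊕ Unit) → (V ⊕ Unit) → ℝ
  | Sum.inl i, Sum.inl l => if i = l then c i else if G l i then a l else 0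
  | Sum.inl _, Sum.inr _ => -1
  | Sum.inr _, Sum.inl l => c l
  | Sum.inr _, Sum.inr _ => 0

/-- The external input of the E-I TLN: `b'_i = θ` for excitatory `i`, `b'_I = 0`. -/
noncomputable def eiB {V : Type} (θ : ℝ) : (V ⊕ Unit) → ℝ :=
  Sum.elim (fun _ => θ) (fun _ => 0)

section Aux

open Classical

/-- Expansion of the input to an excitatory node of the E-I TLN. -/
private lemma eiW_yE {V : Type} [Fintype V] [DecidableEq V] (G : V → V → Prop)
    (a c : V → ℝ) (θ : ℝ) (x : (V ⊕ Unit) → ℝ) (i : V) :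
    tlnY (eiW G a c) (eiB θ) x (Sum.inl i)
      = (∑ l, (if i = l then c i else if G l i then a l else 0) * x (Sum.inl l))
        - x (Sum.inr ()) + θ := by
  simp only [tlnY, Fintype.sum_sum_type, Fintype.sum_unique, eiB, Sum.elim_inl]
  have h1 : ∀ l, eiW G a c (Sum.inl i) (Sum.inl l)
      = (if i = l then c i else if G l i then a l else 0) := fun l => rfl
  have h2 : eiW G a c (Sum.inl i) (Sum.inr ()) = -1 := rfl
  simp only [h1]
  rw [h2]; ring

/-- Expansion of the input to the inhibitory node of the E-I TLN. -/
private lemma eiW_yI {V : Type} [Fintype V] [DecidableEq V] (G : V → V → Prop)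
    (a c : V → ℝ) (θ : ℝ) (x : (V ⊕ Unit) → ℝ) :
    tlnY (eiW G a c) (eiB θ) x (Sum.inr ())
      = ∑ l, c l * x (Sum.inl l) := by
  simp only [tlnY, Fintype.sum_sum_type, Fintype.sum_unique, eiB, Sum.elim_inr]
  have h1 : ∀ l, eiW G a c (Sum.inr ()) (Sum.inl l) = c l := fun l => rfl
  have h2 : eiW G a c (Sum.inr ()) (Sum.inr ()) = 0 := rfl
  simp only [h1, h2]; ring

private lemma fix_nonneg {ι : Type} [Fintype ι] {W : ι → ι → ℝ} {b : ι → ℝ} {x : ι → ℝ}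
    (h : IsFixedPt W b x) (i : ι) : 0 ≤ x i :=
  (h i) ▸ le_max_right _ 0

/-- Splitting a sum over `Fin n` at `j`. -/
private lemma sum_split {n : ℕ} (j : Fin n) (f : Fin n → ℝ) :
    ∑ l, f l = f j + ∑ u : {i : Fin n // i ≠ j}, f u.1 := by
  rw [← Finset.add_sum_erase _ f (Finset.mem_univ j)]
  congr 1
  exact Finset.sum_subtype (p := fun i => i ≠ j) (Finset.univ.erase j) (fun x => by simp) f

/-- The key domination inequality: if `k` dominates `j`, the input to node `j` is bounded. -/
private lemma key_ineq {n : ℕ} (G : Fin n → Fin n → Prop) (hG : ∀ i, ¬ G i i)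
    {j k : Fin n} (hd : GraphDominates G k j)
    (a c : Fin n → ℝ) (ha : ∀ i, 0 < a i) (hc : ∀ i, 1 < c i ∧ c i < 1 + a i)
    (θ : ℝ) (x : (Fin n ⊕ Unit) → ℝ) (hx0 : ∀ i, 0 ≤ x i)
    (hxk : x (Sum.inl k) = max (tlnY (eiW G a c) (eiB θ) x (Sum.inl k)) 0) :
    tlnY (eiW G a c) (eiB θ) x (Sum.inl j)
      ≤ (c j - a j) * x (Sum.inl j) + (1 - c k) * x (Sum.inl k) := by
  obtain ⟨hdom, hjk, hkj⟩ := hd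
  have hjk' : j ≠ k := fun h => hG k (h ▸ hjk)
  -- termwise coefficient inequality
  have hterm : ∀ l : Fin n,
      ((if j = l then c j else if G l j then a l else 0)
        + ((if l = j then a j - c j else 0) + (if l = k then c k else 0))) * x (Sum.inl l)
      ≤ (if k = l then c k else if G l k then a l else 0) * x (Sum.inl l) := by
    intro l
    refine mul_le_mul_of_nonneg_right ?_ (hx0 (Sum.inl l))
    by_cases hlj : l = j
    · subst hlj
      simp [hjk', Ne.symm hjk', hjk]
    · by_cases hlk : l = k
      · subst hlk
        simp [Ne.symm hlj, hkj, hlj]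
      · simp only [if_neg (fun h => hlj h.symm : ¬ j = l), if_neg hlj, if_neg hlk,
          if_neg (fun h => hlk h.symm : ¬ k = l), add_zero, zero_add]
        by_cases hGlj : G l j
        · rw [if_pos hGlj, if_pos (hdom l hlj hlk hGlj)]
        · rw [if_neg hGlj]
          by_cases hGlk : G l k
          · rw [if_pos hGlk]; exact (ha l).le
          · rw [if_neg hGlk]
  have hsum := Finset.sum_le_sum (fun l (_ : l ∈ Finset.univ) => hterm l)
  have e1 : ∑ l : Fin n, (if l = j then a j - c j else 0) * x (Sum.inl l)
      = (a j - c j) * x (Sum.inl j) := by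
    rw [Finset.sum_eq_single j] <;> intros <;> simp_all
  have e2 : ∑ l : Fin n, (if l = k then c k else 0) * x (Sum.inl l)
      = c k * x (Sum.inl k) := by
    rw [Finset.sum_eq_single k] <;> intros <;> simp_all
  simp only [add_mul, Finset.sum_add_distrib, e1, e2] at hsum
  -- relate to tlnY
  have hyk : tlnY (eiW G a c) (eiB θ) x (Sum.inl k) ≤ x (Sum.inl k) :=
    le_of_le_of_eq (le_max_left _ 0) hxk.symm
  rw [eiW_yE] at hyk ⊢
  linarith [hsum]

/-- Matching the excitatory inputs of the full and reduced E-I TLNs. -/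
private lemma match_E {n : ℕ} (G : Fin n → Fin n → Prop) (a c : Fin n → ℝ) (θ : ℝ)
    (j : Fin n) (x : (Fin n ⊕ Unit) → ℝ) (x' : ({i : Fin n // i ≠ j} ⊕ Unit) → ℝ)
    (hxj : x (Sum.inl j) = 0)
    (hE : ∀ u : {i : Fin n // i ≠ j}, x' (Sum.inl u) = x (Sum.inl u.1))
    (hI : x' (Sum.inr ()) = x (Sum.inr ()))
    (u : {i : Fin n // i ≠ j}) :
    tlnY (eiW G a c) (eiB θ) x (Sum.inl u.1)
      = tlnY (eiW (fun p q : {i : Fin n // i ≠ j} => G p.1 q.1)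
          (fun p => a p.1) (fun p => c p.1)) (eiB θ) x' (Sum.inl u) := by
  rw [eiW_yE, eiW_yE, hI]
  congr 1
  congr 1
  rw [sum_split j (fun l => (if u.1 = l then c u.1 else if G l u.1 then a l else 0)
      * x (Sum.inl l))]
  simp only [hxj, mul_zero, zero_add]
  refine Finset.sum_congr rfl (fun v _ => ?_)
  rw [hE v]
  congr 1
  by_cases h : u = v
  · rw [if_pos h, if_pos (congrArg Subtype.val h)]
  · rw [if_neg h, if_neg (fun hv => h (Subtype.ext hv))]

/-- Matching the inhibitory inputs of the full and reduced E-I TLNs. -/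
private lemma match_I {n : ℕ} (G : Fin n → Fin n → Prop) (a c : Fin n → ℝ) (θ : ℝ)
    (j : Fin n) (x : (Fin n ⊕ Unit) → ℝ) (x' : ({i : Fin n // i ≠ j} ⊕ Unit) → ℝ)
    (hxj : x (Sum.inl j) = 0)
    (hE : ∀ u : {i : Fin n // i ≠ j}, x' (Sum.inl u) = x (Sum.inl u.1)) :
    tlnY (eiW G a c) (eiB θ) x (Sum.inr ())
      = tlnY (eiW (fun p q : {i : Fin n // i ≠ j} => G p.1 q.1)
          (fun p => a p.1) (fun p => c p.1)) (eiB θ) x' (Sum.inr ()) := by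
  rw [eiW_yI, eiW_yI]
  rw [sum_split j (fun l => c l * x (Sum.inl l))]
  simp only [hxj, mul_zero, zero_add]
  exact Finset.sum_congr rfl (fun v _ => by rw [hE v])

end Aux

/-- Theorem 1, E-I case: if `j` is a dominated node of the simple directed
graph `G`, then for any parameters `a_i > 0`, `1 < c_i < 1 + a_i`, `θ > 0`, the E-I TLN of
`G` and the E-I TLN of the induced subgraph `G|_{[n]∖j}` (with restricted parameters) have
the same fixed point supports, identifying the excitatory nodes of `G|_{[n]∖j}` and its
inhibitory node with the corresponding nodes of the E-I TLN of `G`. -/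
theorem thm1_EI {n : ℕ} (G : Fin n → Fin n → Prop) (hG : ∀ i, ¬ G i i)
    (j : Fin n) (hj : ∃ k, GraphDominates G k j)
    (a c : Fin n → ℝ) (ha : ∀ i, 0 < a i) (hc : ∀ i, 1 < c i ∧ c i < 1 + a i)
    (θ : ℝ) (hθ : 0 < θ) :
    FPsupp (eiW G a c) (eiB θ) =
      (Set.image (Sum.map (Subtype.val : {i : Fin n // i ≠ j} → Fin n) (id : Unit → Unit))) ''
        FPsupp (eiW (fun u v : {i : Fin n // i ≠ j} => G u.1 v.1)
          (fun u => a u.1) (fun u => c u.1)) (eiB θ) := by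
  classical
  obtain ⟨k, hd⟩ := hj
  have hjk' : j ≠ k := fun h => hG k (h ▸ hd.2.1)
  set W := eiW G a c with hW
  set W' := eiW (fun u v : {i : Fin n // i ≠ j} => G u.1 v.1)
      (fun u => a u.1) (fun u => c u.1) with hW'
  set φ := Sum.map (Subtype.val : {i : Fin n // i ≠ j} → Fin n) (id : Unit → Unit) with hφ
  ext σ
  constructor
  · rintro ⟨x, hx, rfl⟩
    have hx0 := fix_nonneg hx
    -- x_j = 0
    have hxj : x (Sum.inl j) = 0 := by
      by_contra hne
      have hpos : 0 < x (Sum.inl j) := lt_of_le_of_ne (hx0 _) (Ne.symm hne)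
      have hk := key_ineq G hG hd a c ha hc θ x hx0 (hx (Sum.inl k))
      have hxeq : x (Sum.inl j) = tlnY W (eiB θ) x (Sum.inl j) := by
        rw [hx (Sum.inl j), max_eq_left]
        by_contra hle
        push_neg at hle
        have := hx (Sum.inl j)
        rw [max_eq_right hle.le] at this
        exact hne this
      have h1 : (1 - c k) * x (Sum.inl k) ≤ 0 :=
        mul_nonpos_of_nonpos_of_nonneg (by linarith [(hc k).1]) (hx0 _)
      nlinarith [(hc j).2, hpos]
    -- restricted fixed point
    set x' : ({i : Fin n // i ≠ j} ⊕ Unit) → ℝ := fun i' => x (φ i') with hx'def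
    have hE : ∀ u : {i : Fin n // i ≠ j}, x' (Sum.inl u) = x (Sum.inl u.1) := fun u => rfl
    have hI : x' (Sum.inr ()) = x (Sum.inr ()) := rfl
    have hfix' : IsFixedPt W' (eiB θ) x' := by
      rintro (u | u)
      · rw [hE u, ← match_E G a c θ j x x' hxj hE hI u]
        exact hx (Sum.inl u.1)
      · cases u
        rw [hI, ← match_I G a c θ j x x' hxj hE]
        exact hx (Sum.inr ())
    refine ⟨{i' | 0 < x' i'}, ⟨x', hfix', rfl⟩, ?_⟩
    ext i
    simp only [Set.mem_image, Set.mem_setOf_eq]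
    constructor
    · rintro ⟨(u | u), hu, rfl⟩
      · exact hu
      · exact hu
    · intro hi
      rcases i with m | u
      · have hm : m ≠ j := by rintro rfl; rw [hxj] at hi; exact lt_irrefl 0 hi
        exact ⟨Sum.inl ⟨m, hm⟩, hi, rfl⟩
      · cases u
        exact ⟨Sum.inr (), hi, rfl⟩
  · rintro ⟨σ', ⟨x', hfix', rfl⟩, rfl⟩
    have hx'0 := fix_nonneg hfix'
    -- extend x' to x with x_j = 0
    set x : (Fin n ⊕ Unit) → ℝ := fun i => match i with
      | Sum.inl m => if h : m = j then 0 else x' (Sum.inl ⟨m, h⟩)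
      | Sum.inr _ => x' (Sum.inr ()) with hxdef
    have hxj : x (Sum.inl j) = 0 := by simp [hxdef]
    have hE : ∀ u : {i : Fin n // i ≠ j}, x' (Sum.inl u) = x (Sum.inl u.1) := by
      rintro ⟨m, hm⟩
      simp [hxdef, hm]
    have hI : x' (Sum.inr ()) = x (Sum.inr ()) := rfl
    have hx0 : ∀ i, 0 ≤ x i := by
      rintro (m | u)
      · by_cases h : m = j
        · subst h; rw [hxj]
        · rw [← hE ⟨m, h⟩]; exact hx'0 _
      · exact hx'0 (Sum.inr ())
    -- fixed point equations away from j
    have hne : ∀ i : Fin n, i ≠ j → x (Sum.inl i) = max (tlnY W (eiB θ) x (Sum.inl i)) 0 := by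
      intro i hi
      rw [← hE ⟨i, hi⟩, match_E G a c θ j x x' hxj hE hI ⟨i, hi⟩]
      exact hfix' (Sum.inl ⟨i, hi⟩)
    have hIeq : x (Sum.inr ()) = max (tlnY W (eiB θ) x (Sum.inr ())) 0 := by
      rw [← hI, match_I G a c θ j x x' hxj hE]
      exact hfix' (Sum.inr ())
    have hfix : IsFixedPt W (eiB θ) x := by
      rintro (m | u)
      · by_cases h : m = j
        · subst h
          have hk := key_ineq G hG hd a c ha hc θ x hx0 (hne k (Ne.symm hjk'))
          rw [hxj] at hk ⊢
          have h1 : (1 - c k) * x (Sum.inl k) ≤ 0 :=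
            mul_nonpos_of_nonpos_of_nonneg (by linarith [(hc k).1]) (hx0 (Sum.inl k))
          rw [max_eq_right]
          linarith
        · exact hne m h
      · cases u; exact hIeq
    refine ⟨x, hfix, ?_⟩
    ext i
    simp only [Set.mem_image, Set.mem_setOf_eq]
    constructor
    · rintro ⟨(u | u), hu, rfl⟩
      · exact lt_of_lt_of_eq hu (hE u)
      · cases u
        exact hu
    · intro hi
      rcases i with m | u
      · have hm : m ≠ j := by rintro rfl; rw [hxj] at hi; exact lt_irrefl 0 hi
        exact ⟨Sum.inl ⟨m, hm⟩, by show 0 < x' (Sum.inl ⟨m, hm⟩); rw [hE ⟨m, hm⟩]; exact hi, rfl⟩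
      · cases u
        exact ⟨Sum.inr (), hi, rfl⟩
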